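/- Under the CFL condition $\Delta t \leq \Delta x/\overline{a}$, the periodic upwind scheme satisfies the discrete weighted $L^2$ bound $\Delta x \sum_{j=1}^{N_x} (w_j^n)^2/a_j \leq \Delta x \sum_{j=1}^{N_x} (w_j^0)^2/a_j$ for all $n \geq 0$. -/

import Mathlib

/-!
The weight `1 / a j` turns the Courant number `a j * r` of cell `j` into the mesh ratio `r`.
Each new value is a convex combination of two old ones (by the CFL condition), so by convexity of
the square the weighted energy of cell `j` loses `r (u j)²` and gains `r (u (j - 1))²`; summed
over the periodic grid these two terms cancel, as the shift `j ↦ j - 1` is a bijection.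
-/

open Finset

theorem sq_convex_comb_le {ν : ℝ} (hν₀ : 0 ≤ ν) (hν₁ : ν ≤ 1) (x y : ℝ) :
    ((1 - ν) * x + ν * y) ^ 2 ≤ (1 - ν) * x ^ 2 + ν * y ^ 2 := by
  -- the gap is `ν (1 - ν) (x - y)²`
  nlinarith [mul_nonneg (mul_nonneg hν₀ (sub_nonneg.2 hν₁)) (sq_nonneg (x - y))]

noncomputable section Upwind

variable {G : Type*} [AddGroupWithOne G]

def weightedEnergy [Fintype G] (a u : G → ℝ) : ℝ := ∑ j, u j ^ 2 / a j

def upwindStep (a : G → ℝ) (r : ℝ) (u : G → ℝ) (j : G) : ℝ :=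
  (1 - a j * r) * u j + a j * r * u (j - 1)

theorem upwindStep_sq_div_le {a : G → ℝ} {r : ℝ} {j : G} (ha : 0 < a j) (hr : 0 ≤ r)
    (hcfl : a j * r ≤ 1) (u : G → ℝ) :
    upwindStep a r u j ^ 2 / a j ≤ u j ^ 2 / a j - r * u j ^ 2 + r * u (j - 1) ^ 2 := by
  calc upwindStep a r u j ^ 2 / a j
      ≤ ((1 - a j * r) * u j ^ 2 + a j * r * u (j - 1) ^ 2) / a j :=
        div_le_div_of_nonneg_right
          (sq_convex_comb_le (by positivity) hcfl (u j) (u (j - 1))) ha.le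
    _ = u j ^ 2 / a j - r * u j ^ 2 + r * u (j - 1) ^ 2 := by
        field_simp

theorem weightedEnergy_upwindStep_le [Fintype G] {a : G → ℝ} {r : ℝ} (ha : ∀ j, 0 < a j)
    (hr : 0 ≤ r) (hcfl : ∀ j, a j * r ≤ 1) (u : G → ℝ) :
    weightedEnergy a (upwindStep a r u) ≤ weightedEnergy a u := by
  have hshift : ∑ j, u (j - 1) ^ 2 = ∑ j, u j ^ 2 :=
    (Equiv.subRight (1 : G)).sum_comp (fun j => u j ^ 2)
  calc weightedEnergy a (upwindStep a r u)
      ≤ ∑ j, (u j ^ 2 / a j - r * u j ^ 2 + r * u (j - 1) ^ 2) :=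
        sum_le_sum fun j _ => upwindStep_sq_div_le (ha j) hr (hcfl j) u
    _ = weightedEnergy a u := by
        rw [sum_add_distrib, sum_sub_distrib, ← mul_sum, ← mul_sum, hshift, weightedEnergy]
        ring

end Upwind

/-- Discrete weighted L² stability of the periodic upwind scheme. -/
theorem upwind_L2_bound (Nx : ℕ) [NeZero Nx]
    (a : ZMod Nx → ℝ) (w : ℕ → ZMod Nx → ℝ)
    (ua oa Δt Δx : ℝ)
    (hua : 0 < ua) (hbd : ∀ j, ua ≤ a j ∧ a j ≤ oa)
    (hΔx : 0 < Δx) (hΔt : 0 < Δt) (hcfl : Δt ≤ Δx / oa)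
    (hscheme : ∀ n j, w (n + 1) j =
      (1 - a j * Δt / Δx) * w n j + (a j * Δt / Δx) * w n (j - 1)) :
    ∀ n, Δx * ∑ j : ZMod Nx, (w n j) ^ 2 / a j
      ≤ Δx * ∑ j : ZMod Nx, (w 0 j) ^ 2 / a j := by
  have ha : ∀ j, 0 < a j := fun j => hua.trans_le (hbd j).1
  have hoa : 0 < oa := (ha 0).trans_le (hbd 0).2
  have hcourant : ∀ j, a j * (Δt / Δx) ≤ 1 := fun j => by
    rw [← mul_div_assoc, div_le_one hΔx]
    calc a j * Δt ≤ oa * (Δx / oa) := mul_le_mul (hbd j).2 hcfl hΔt.le hoa.le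
      _ = Δx := by field_simp
  have hstep : ∀ n, w (n + 1) = upwindStep a (Δt / Δx) (w n) := fun n => by
    ext j
    simp only [hscheme, upwindStep, mul_div_assoc]
  have hanti : Antitone fun n => weightedEnergy a (w n) := antitone_nat_of_succ_le fun n => by
    rw [hstep n]
    exact weightedEnergy_upwindStep_le ha (by positivity) hcourant (w n)
  exact fun n => mul_le_mul_of_nonneg_left (hanti (Nat.zero_le n)) hΔx.le
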